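/- (Theorem 1: FDR control of the oracle Heir-GBH) Consider a hierarchical classification of {1,…,N} in L ≥ 1 levels where groups at each level may overlap, with level-L (leaf) groups G(g_1⋯g_L) indexed by tuples (g_1,…,g_L), whose union is {1,…,N}. For each group G(g_1⋯g_l) let n_{g_1⋯g_l} = |G(g_1⋯g_l)|, n^0_{g_1⋯g_l} = |G(g_1⋯g_l) ∩ I^0|, and π^0_{g_1⋯g_l} = n^0_{g_1⋯g_l}/n_{g_1⋯g_l}; let π^0 = |I^0|/N. Assume 0 < π^0 < 1, 0 < π^0_{g_1⋯g_l} < 1 for all groups at all levels, and I^0 ≠ ∅. Define w_∅ = π^0, w_{g_1} = (1−π^0)·π^0_{g_1}/(1−π^0_{g_1}), and for l ≥ 2, w_{g_1⋯g_l} = w_{g_1⋯g_{l−2}} · ((1−π^0_{g_1⋯g_{l−1}})/π^0_{g_1⋯g_{l−1}}) · (π^0_{g_1⋯g_l}/(1−π^0_{g_1⋯g_l})); and define weights W_i by 1/W_i = ((1/N)·Σ_{(g_1,…,g_L)} n^0_{g_1⋯g_L}/w_{g_1⋯g_L})^{-1} · Σ_{(g_1,…,g_L) : i ∈ G(g_1⋯g_L)}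 1/w_{g_1⋯g_L}. Under Assumptions 1 and 2, the level-α weighted BH procedure applied to the weighted p-values W_i·P_i has FDR ≤ α. -/

import Mathlib

open MeasureTheory ProbabilityTheory Finset

/-- Number of rejections of the (weighted) BH step-up procedure at level `α`,
applied to the (weighted) p-values `Q`: the largest `j ≤ N` such that at least `j`
of the values `Q i` are `≤ j*α/N` (this is `0`, i.e. no rejections, when no such
`j ≥ 1` exists). -/
noncomputable def bhNumRejections (N : ℕ) (α : ℝ) (Q : Fin N → ℝ) : ℕ :=
  ((Finset.range (N + 1)).filter
      (fun j : ℕ => j ≤ (Finset.univ.filter (fun i : Fin N => Q i ≤ (j : ℝ) * α / N)).card)).sup id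

/-- The set of indices rejected by the level-`α` BH procedure applied to `Q`. -/
noncomputable def bhRejected (N : ℕ) (α : ℝ) (Q : Fin N → ℝ) : Finset (Fin N) :=
  Finset.univ.filter (fun i => Q i ≤ (bhNumRejections N α Q : ℝ) * α / N)

/-- False discovery proportion `V / max(R,1)` of the level-`α` BH procedure. -/
noncomputable def FDP (N : ℕ) (α : ℝ) (I0 : Finset (Fin N)) (Q : Fin N → ℝ) : ℝ :=
  ((bhRejected N α Q ∩ I0).card : ℝ) / max ((bhRejected N α Q).card : ℝ) 1

/-- False discovery rate `E[V / max(R,1)]` of the level-`α` BH procedure applied to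
the (random, possibly weighted) p-values `Q ω`. -/
noncomputable def FDR {Ω : Type*} [MeasurableSpace Ω] (μ : Measure Ω)
    (N : ℕ) (α : ℝ) (I0 : Finset (Fin N)) (Q : Ω → Fin N → ℝ) : ℝ :=
  ∫ ω, FDP N α I0 (Q ω) ∂μ

/-- Assumption 1: each null p-value is Uniform(0,1) (stated via its cdf). -/
def UniformNulls {Ω : Type*} [MeasurableSpace Ω] (μ : Measure Ω)
    {N : ℕ} (P : Ω → Fin N → ℝ) (I0 : Finset (Fin N)) : Prop :=
  ∀ i ∈ I0, ∀ x ∈ Set.Icc (0 : ℝ) 1, μ {ω | P ω i ≤ x} = ENNReal.ofReal x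

/-- Assumption 2: the p-values are PRDS on the subset of null p-values. -/
def PRDSNulls {Ω : Type*} [MeasurableSpace Ω] (μ : Measure Ω)
    {N : ℕ} (P : Ω → Fin N → ℝ) (I0 : Finset (Fin N)) : Prop :=
  ∀ i ∈ I0, ∀ φ : (Fin N → ℝ) → ℝ, Measurable φ → (∃ C, ∀ p, |φ p| ≤ C) →
    (∀ p q : Fin N → ℝ, (∀ j, p j ≤ q j) → φ p ≤ φ q) →
    ∀ x y : ℝ, 0 < x → x ≤ y → y ≤ 1 →
      (∫ ω in {ω | P ω i ≤ x}, φ (P ω) ∂μ) / (μ {ω | P ω i ≤ x}).toReal ≤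
        (∫ ω in {ω | P ω i ≤ y}, φ (P ω) ∂μ) / (μ {ω | P ω i ≤ y}).toReal

open scoped Classical

lemma bh_le (N : ℕ) (α : ℝ) (Q : Fin N → ℝ) : bhNumRejections N α Q ≤ N := by
  apply Finset.sup_le
  intro j hj
  simp only [Finset.mem_filter, Finset.mem_range] at hj
  exact Nat.lt_succ_iff.mp hj.1

lemma bh_mem (N : ℕ) (α : ℝ) (Q : Fin N → ℝ) :
    bhNumRejections N α Q ≤
      (Finset.univ.filter (fun i : Fin N => Q i ≤ (bhNumRejections N α Q : ℝ) * α / N)).card := by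
  obtain ⟨j, hj, hje⟩ := Finset.exists_mem_eq_sup
    ((Finset.range (N + 1)).filter
      (fun j : ℕ => j ≤ (Finset.univ.filter (fun i : Fin N => Q i ≤ (j : ℝ) * α / N)).card))
    ⟨0, by simp⟩ id
  simp only [Finset.mem_filter, Finset.mem_range] at hj
  rw [show bhNumRejections N α Q = j from hje]
  exact hj.2

lemma cnt_mono (N : ℕ) {α : ℝ} (hα : 0 ≤ α) (Q : Fin N → ℝ) {j k : ℕ} (hjk : j ≤ k) :
    (Finset.univ.filter (fun i : Fin N => Q i ≤ (j : ℝ) * α / N)).card ≤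
      (Finset.univ.filter (fun i : Fin N => Q i ≤ (k : ℝ) * α / N)).card := by
  apply Finset.card_le_card
  intro i hi
  simp only [Finset.mem_filter, Finset.mem_univ, true_and] at hi ⊢
  refine hi.trans ?_
  gcongr

lemma bh_card (N : ℕ) {α : ℝ} (hα : 0 ≤ α) (Q : Fin N → ℝ) :
    (Finset.univ.filter (fun i : Fin N => Q i ≤ (bhNumRejections N α Q : ℝ) * α / N)).card
      = bhNumRejections N α Q := by
  set R := bhNumRejections N α Q with hR
  set m := (Finset.univ.filter (fun i : Fin N => Q i ≤ (R : ℝ) * α / N)).card with hm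
  have h1 : R ≤ m := bh_mem N α Q
  rcases lt_or_eq_of_le h1 with h | h
  · exfalso
    have hmN : m ≤ N := le_trans (Finset.card_filter_le _ _) (by simp)
    have hmm : m ≤ (Finset.univ.filter (fun i : Fin N => Q i ≤ (m : ℝ) * α / N)).card :=
      le_trans (le_of_eq hm) (cnt_mono N hα Q h.le)
    have : m ≤ R := Finset.le_sup (f := id) (by
      simp only [Finset.mem_filter, Finset.mem_range]
      exact ⟨Nat.lt_succ_of_le hmN, hmm⟩)
    omega
  · exact h.symm

lemma bh_anti (N : ℕ) {α : ℝ} (hα : 0 ≤ α) {W : Fin N → ℝ} (hW : ∀ i, 0 < W i)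
    {p q : Fin N → ℝ} (hpq : ∀ i, p i ≤ q i) :
    bhNumRejections N α (fun i => W i * q i) ≤ bhNumRejections N α (fun i => W i * p i) := by
  apply Finset.sup_le
  intro j hj
  simp only [Finset.mem_filter, Finset.mem_range] at hj
  apply Finset.le_sup (f := id)
  simp only [Finset.mem_filter, Finset.mem_range]
  refine ⟨hj.1, hj.2.trans (Finset.card_le_card ?_)⟩
  intro i hi
  simp only [Finset.mem_filter, Finset.mem_univ, true_and] at hi ⊢
  exact le_trans (by nlinarith [hW i, hpq i]) hi

lemma bh_measurable (N : ℕ) (α : ℝ) : Measurable (bhNumRejections N α) := by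
  have hh : Measurable (fun (Q : Fin N → ℝ) (j : Fin (N + 1)) =>
      (Finset.univ.filter (fun i : Fin N => Q i ≤ ((j : ℕ) : ℝ) * α / N)).card) := by
    apply measurable_pi_lambda
    intro j
    have : (fun (Q : Fin N → ℝ) =>
        (Finset.univ.filter (fun i : Fin N => Q i ≤ ((j : ℕ) : ℝ) * α / N)).card)
        = fun Q => ∑ i : Fin N, if Q i ≤ ((j : ℕ) : ℝ) * α / N then 1 else 0 := by
      funext Q
      exact Finset.card_filter _ _
    rw [this]
    apply Finset.measurable_sum
    intro i _
    apply Measurable.ite ?_ measurable_const measurable_const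
    exact measurableSet_le (measurable_pi_apply i) measurable_const
  have key : bhNumRejections N α = (fun v : Fin (N + 1) → ℕ =>
      Finset.univ.sup (fun j : Fin (N + 1) => if (j : ℕ) ≤ v j then (j : ℕ) else 0)) ∘
      (fun (Q : Fin N → ℝ) (j : Fin (N + 1)) =>
        (Finset.univ.filter (fun i : Fin N => Q i ≤ ((j : ℕ) : ℝ) * α / N)).card) := by
    funext Q
    simp only [Function.comp_apply]
    apply le_antisymm
    · apply Finset.sup_le
      intro j hj
      simp only [Finset.mem_filter, Finset.mem_range] at hj
      have hmem := Finset.le_sup (s := (Finset.univ : Finset (Fin (N + 1))))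
        (f := fun j' : Fin (N + 1) => if (j' : ℕ) ≤
          (Finset.univ.filter (fun i : Fin N => Q i ≤ ((j' : ℕ) : ℝ) * α / N)).card
          then (j' : ℕ) else 0)
        (Finset.mem_univ (⟨j, hj.1⟩ : Fin (N + 1)))
      simpa [hj.2] using hmem
    · apply Finset.sup_le
      intro j _
      split
      · next h =>
        apply Finset.le_sup (f := id)
        simp only [Finset.mem_filter, Finset.mem_range]
        exact ⟨j.isLt, h⟩
      · exact Nat.zero_le _
  rw [key]
  exact (measurable_of_countable _).comp hh


lemma FDP_decomp (N : ℕ) (hN : 0 < N) {α : ℝ} (hα : 0 < α) (I0 : Finset (Fin N))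
    {W : Fin N → ℝ} (hW : ∀ i, 0 < W i) (p : Fin N → ℝ) (hp : ∀ i, p i ∈ Set.Icc (0:ℝ) 1) :
    FDP N α I0 (fun i => W i * p i) =
      ∑ i ∈ I0, ∑ j ∈ Finset.range N,
        if (p i ≤ min (((j : ℝ) + 1) * α / (N * W i)) 1 ∧
            bhNumRejections N α (fun l => W l * p l) = j + 1)
        then (1 : ℝ) / (j + 1) else 0 := by
  set Q : Fin N → ℝ := fun i => W i * p i with hQ
  set R := bhNumRejections N α Q with hRdef
  have hNpos : (0:ℝ) < N := by exact_mod_cast hN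
  rcases Nat.eq_zero_or_pos R with hR0 | hR1
  · -- no rejections
    have hrej : bhRejected N α Q = ∅ := by
      rw [Finset.eq_empty_iff_forall_notMem]
      intro i hi
      simp only [bhRejected, Finset.mem_filter, Finset.mem_univ, true_and, ← hRdef, hR0] at hi
      have h1 : (1:ℕ) ≤ (Finset.univ.filter (fun l : Fin N => Q l ≤ ((1:ℕ) : ℝ) * α / N)).card := by
        rw [Nat.one_le_iff_ne_zero, ← Nat.pos_iff_ne_zero, Finset.card_pos]
        refine ⟨i, ?_⟩
        simp only [Finset.mem_filter, Finset.mem_univ, true_and]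
        refine le_trans (by simpa using hi) ?_
        positivity
      have : (1:ℕ) ≤ R := by
        apply Finset.le_sup (f := id)
        simp only [Finset.mem_filter, Finset.mem_range]
        exact ⟨by omega, h1⟩
      omega
    have hL : FDP N α I0 Q = 0 := by
      simp [FDP, hrej]
    rw [hL]
    symm
    apply Finset.sum_eq_zero
    intro i _
    apply Finset.sum_eq_zero
    intro j _
    rw [if_neg]
    rintro ⟨-, h⟩
    omega
  · -- R ≥ 1 rejections
    have hRN : R ≤ N := bh_le N α Q
    have hcard : (bhRejected N α Q).card = R := by
      simpa [bhRejected, ← hRdef] using bh_card N hα.le Q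
    have hcond : ∀ i : Fin N, (Q i ≤ (R : ℝ) * α / N ↔
        p i ≤ min (((R:ℝ) - 1 + 1) * α / (N * W i)) 1) := by
      intro i
      rw [le_min_iff]
      have h2 : p i ≤ 1 := (hp i).2
      have hWi := hW i
      have hNW : (0:ℝ) < N * W i := by positivity
      have hQi : Q i = W i * p i := rfl
      constructor
      · intro h
        refine ⟨?_, h2⟩
        have h' := (le_div_iff₀ hNpos).mp h
        rw [le_div_iff₀ hNW]
        nlinarith [h', hQi]
      · rintro ⟨h, -⟩
        have h' := (le_div_iff₀ hNW).mp h
        rw [le_div_iff₀ hNpos]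
        nlinarith [h', hQi]
    have hinter : bhRejected N α Q ∩ I0 = I0.filter (fun i => Q i ≤ (R : ℝ) * α / N) := by
      ext i
      simp [bhRejected, ← hRdef, Finset.mem_filter, Finset.mem_inter, and_comm]
    have hRr : (1:ℝ) ≤ (R:ℝ) := by exact_mod_cast hR1
    have hL : FDP N α I0 Q =
        ∑ i ∈ I0, (if Q i ≤ (R : ℝ) * α / N then (1:ℝ)/(R:ℝ) else 0) := by
      rw [FDP, hcard, hinter, max_eq_left hRr, Finset.card_filter]
      push_cast
      rw [Finset.sum_div]
      apply Finset.sum_congr rfl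
      intro i _
      split <;> simp
    rw [hL]
    apply Finset.sum_congr rfl
    intro i _
    rw [Finset.sum_eq_single_of_mem (R - 1) (by simp only [Finset.mem_range]; omega)]
    · have hcast : ((R - 1 : ℕ) : ℝ) = (R:ℝ) - 1 := by
        have : (1:ℕ) ≤ R := hR1
        push_cast [this]
        ring
      rw [hcast]
      have hR1' : R - 1 + 1 = R := by omega
      by_cases h : Q i ≤ (R : ℝ) * α / N
      · rw [if_pos h, if_pos ⟨(hcond i).mp h, by omega⟩]
        congr 1
        rw [show (R:ℝ) - 1 + 1 = (R:ℝ) by ring]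
      · rw [if_neg h, if_neg]
        rintro ⟨hc, -⟩
        exact h ((hcond i).mpr (by rwa [show ((R:ℝ)-1+1) = (R:ℝ) by ring] at hc ⊢))
    · intro j _ hj
      rw [if_neg]
      rintro ⟨-, h⟩
      omega


lemma meas_diff_toReal {Ω : Type*} [MeasurableSpace Ω] (μ : Measure Ω) [IsFiniteMeasure μ]
    {s t : Set Ω} (ht : MeasurableSet t) (hts : t ⊆ s) :
    (μ (s \ t)).toReal = (μ s).toReal - (μ t).toReal := by
  rw [measure_diff hts ht.nullMeasurableSet (measure_ne_top μ t),
    ENNReal.toReal_sub_of_le (measure_mono hts) (measure_ne_top μ s)]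

lemma key_null {Ω : Type*} [MeasurableSpace Ω] (μ : Measure Ω) [IsProbabilityMeasure μ]
    {N : ℕ} (hN : 0 < N) (P : Ω → Fin N → ℝ) (hPmeas : Measurable P)
    (I0 : Finset (Fin N)) {i : Fin N} (hi : i ∈ I0)
    (hUnif : UniformNulls μ P I0) (hPRDS : PRDSNulls μ P I0)
    {W : Fin N → ℝ} (hW : ∀ j, 0 < W j) {α : ℝ} (hα : 0 < α) :
    ∑ j ∈ Finset.range N, (1 / ((j:ℝ) + 1)) *
      (μ ({ω | P ω i ≤ min (((j:ℝ) + 1) * α / (N * W i)) 1} ∩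
          {ω | bhNumRejections N α (fun l => W l * P ω l) = j + 1})).toReal
      ≤ α / N * (1 / W i) := by
  have hWi := hW i
  have hNpos : (0:ℝ) < N := by exact_mod_cast hN
  have hc : (0:ℝ) < α / (N * W i) := by positivity
  set R : Ω → ℕ := fun ω => bhNumRejections N α (fun l => W l * P ω l) with hRdef
  have hRmeas : Measurable R := by
    apply (bh_measurable N α).comp
    apply measurable_pi_lambda
    intro l
    exact measurable_const.mul ((measurable_pi_apply l).comp hPmeas)
  have hPimeas : Measurable (fun ω => P ω i) := (measurable_pi_apply i).comp hPmeas
  set x : ℕ → ℝ := fun j => min (((j:ℝ) + 1) * α / (N * W i)) 1 with hxdef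
  have hx0 : ∀ j : ℕ, 0 < x j := by
    intro j
    apply lt_min _ one_pos
    have : (0:ℝ) < (j:ℝ) + 1 := by positivity
    positivity
  have hx1 : ∀ j : ℕ, x j ≤ 1 := fun j => min_le_right _ _
  have hxmono : ∀ j : ℕ, x j ≤ x (j + 1) := by
    intro j
    apply min_le_min _ le_rfl
    gcongr
    · push_cast; linarith
  set A : ℕ → Set Ω := fun j => {ω | P ω i ≤ x j} with hAdef
  have hAmeas : ∀ j, MeasurableSet (A j) := fun j =>
    measurableSet_le hPimeas measurable_const
  set B : ℕ → Set Ω := fun k => {ω | k ≤ R ω} with hBdef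
  have hBmeas : ∀ k, MeasurableSet (B k) := fun k => hRmeas (by trivial)
  have hmuA : ∀ j, (μ (A j)).toReal = x j := by
    intro j
    rw [hUnif i hi (x j) ⟨(hx0 j).le, hx1 j⟩, ENNReal.toReal_ofReal (hx0 j).le]
  set S : ℕ → ℝ := fun j => (μ (A j ∩ B (j + 1))).toReal with hSdef
  set T : ℕ → ℝ := fun j => (μ (A j ∩ B (j + 2))).toReal with hTdef
  have hS0 : ∀ j, 0 ≤ S j := fun j => ENNReal.toReal_nonneg
  have hT0 : ∀ j, 0 ≤ T j := fun j => ENNReal.toReal_nonneg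
  -- Step 1: each term equals (1/(j+1)) * (S j - T j)
  have hterm : ∀ j : ℕ,
      (μ (A j ∩ {ω | R ω = j + 1})).toReal = S j - T j := by
    intro j
    have hsub : A j ∩ B (j + 2) ⊆ A j ∩ B (j + 1) := by
      intro ω hω
      exact ⟨hω.1, by have := hω.2; simp only [hBdef, Set.mem_setOf_eq] at this ⊢; omega⟩
    have hE : A j ∩ {ω | R ω = j + 1} = (A j ∩ B (j + 1)) \ (A j ∩ B (j + 2)) := by
      ext ω
      by_cases hP : P ω i ≤ x j <;>
        simp only [Set.mem_inter_iff, Set.mem_diff, Set.mem_setOf_eq, hAdef, hBdef, hP,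
          true_and, false_and, not_and, and_imp] <;>
      · constructor
        · intro h; omega
        · intro h; omega
    rw [hE, meas_diff_toReal μ ((hAmeas j).inter (hBmeas (j + 2))) hsub]
  -- Step 2: PRDS inequality
  have hstep : ∀ j : ℕ, (1 / ((j:ℝ) + 2)) * S (j + 1) ≤ (1 / ((j:ℝ) + 1)) * T j := by
    intro j
    set φ : (Fin N → ℝ) → ℝ :=
      fun p => if bhNumRejections N α (fun l => W l * p l) ≤ j + 1 then (1:ℝ) else 0 with hφdef
    have hφmeas : Measurable φ := by
      apply Measurable.ite _ measurable_const measurable_const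
      have : Measurable (fun p : Fin N → ℝ => bhNumRejections N α (fun l => W l * p l)) := by
        apply (bh_measurable N α).comp
        apply measurable_pi_lambda
        intro l
        exact measurable_const.mul (measurable_pi_apply l)
      exact this (show MeasurableSet (Set.Iic (j + 1) : Set ℕ) from trivial)
    have hφbdd : ∃ C, ∀ p, |φ p| ≤ C := ⟨1, fun p => by
      simp only [hφdef]; split <;> simp⟩
    have hφmono : ∀ p q : Fin N → ℝ, (∀ l, p l ≤ q l) → φ p ≤ φ q := by
      intro p q hpq
      simp only [hφdef]
      split
      · next h =>
        rw [if_pos (le_trans (bh_anti N hα.le hW hpq) h)]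
      · split <;> norm_num
    have hφind : ∀ ω, φ (P ω) = Set.indicator {ω' | R ω' ≤ j + 1} (fun _ => (1:ℝ)) ω := by
      intro ω
      simp only [hφdef, Set.indicator_apply, Set.mem_setOf_eq, hRdef]
    have hRle : MeasurableSet {ω' | R ω' ≤ j + 1} := hRmeas (show MeasurableSet (Set.Iic (j+1) : Set ℕ) from trivial)
    have hint : ∀ m : ℕ, ∫ ω in A m, φ (P ω) ∂μ =
        (μ (A m)).toReal - (μ (A m ∩ B (j + 2))).toReal := by
      intro m
      have h1 : ∫ ω in A m, φ (P ω) ∂μ =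
          ∫ ω in A m, Set.indicator {ω' | R ω' ≤ j + 1} (fun _ => (1:ℝ)) ω ∂μ := by
        apply integral_congr_ae
        filter_upwards with ω using hφind ω
      rw [h1, MeasureTheory.integral_indicator_const (1:ℝ) hRle, measureReal_def,
        Measure.restrict_apply hRle]
      have hE : {ω' | R ω' ≤ j + 1} ∩ A m = A m \ (A m ∩ B (j + 2)) := by
        ext ω
        by_cases hP : P ω i ≤ x m <;>
          simp only [Set.mem_inter_iff, Set.mem_diff, Set.mem_setOf_eq, hAdef, hBdef, hP,
            true_and, false_and, and_true, and_false, not_and, and_imp] <;>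
        · constructor
          · intro h; omega
          · intro h; omega
      rw [hE, meas_diff_toReal μ ((hAmeas m).inter (hBmeas (j + 2))) Set.inter_subset_left]
      simp
    -- PRDS applied with x = x j, y = x (j+1)
    have hA' : ∀ m : ℕ, A m = {ω | P ω i ≤ x m} := fun m => rfl
    have hprds := hPRDS i hi φ hφmeas hφbdd hφmono (x j) (x (j + 1))
      (hx0 j) (hxmono j) (hx1 (j + 1))
    rw [← hA' j, ← hA' (j + 1), hint j, hint (j + 1)] at hprds
    rw [hmuA j, hmuA (j + 1)] at hprds
    rw [show (μ (A j ∩ B (j + 2))).toReal = T j from rfl,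
      show (μ (A (j + 1) ∩ B (j + 2))).toReal = S (j + 1) from rfl] at hprds
    -- hprds : (x j - T j)/(x j) ≤ (x (j+1) - S (j+1))/(x (j+1))
    have hxj := hx0 j
    have hxj1 := hx0 (j + 1)
    have hkey : S (j + 1) * x j ≤ T j * x (j + 1) := by
      rw [div_le_div_iff₀ hxj hxj1] at hprds
      nlinarith [hprds]
    -- ratio bound : (j+1) * x (j+1) ≤ (j+2) * x j
    have hratio : ((j:ℝ) + 1) * x (j + 1) ≤ ((j:ℝ) + 2) * x j := by
      have hcast : ((j:ℝ) + 1 + 1) = (j:ℝ) + 2 := by ring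
      rcases le_total ((((j:ℝ) + 1)) * α / (N * W i)) 1 with hcase | hcase
      · have hxjeq : x j = ((j:ℝ) + 1) * α / (N * W i) := min_eq_left hcase
        have hle : x (j + 1) ≤ ((j:ℝ) + 2) * α / (N * W i) := by
          simp only [hxdef]
          push_cast
          rw [hcast]
          exact min_le_left _ _
        rw [hxjeq]
        calc ((j:ℝ) + 1) * x (j + 1) ≤ ((j:ℝ) + 1) * (((j:ℝ) + 2) * α / (N * W i)) := by
              apply mul_le_mul_of_nonneg_left hle (by positivity)
          _ = ((j:ℝ) + 2) * (((j:ℝ) + 1) * α / (N * W i)) := by ring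
      · have hxjeq : x j = 1 := min_eq_right hcase
        have hle : x (j + 1) ≤ 1 := hx1 _
        rw [hxjeq, mul_one]
        calc ((j:ℝ) + 1) * x (j + 1) ≤ ((j:ℝ) + 1) * 1 := by
              apply mul_le_mul_of_nonneg_left hle (by positivity)
          _ ≤ (j:ℝ) + 2 := by linarith
    -- combine
    rw [div_mul_eq_mul_div, div_mul_eq_mul_div, div_le_div_iff₀ (by positivity) (by positivity)]
    nlinarith [mul_le_mul_of_nonneg_left hkey (show (0:ℝ) ≤ (j:ℝ)+1 by positivity),
      mul_le_mul_of_nonneg_left hratio (hT0 j), hx0 j, hT0 j, hS0 (j+1)]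
  -- Step 3: rewrite terms and telescope
  have hterm' : ∀ j ∈ Finset.range N,
      (1 / ((j:ℝ) + 1)) *
        (μ ({ω | P ω i ≤ min (((j:ℝ) + 1) * α / (N * W i)) 1} ∩
            {ω | bhNumRejections N α (fun l => W l * P ω l) = j + 1})).toReal
      = (1 / ((j:ℝ) + 1)) * (S j - T j) := by
    intro j _
    rw [← hterm j]
  set g : ℕ → ℝ := fun j => (1 / ((j:ℝ) + 1)) * S j with hgdef
  have hbound : ∀ j ∈ Finset.range N,
      (1 / ((j:ℝ) + 1)) * (S j - T j) ≤ g j - g (j + 1) := by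
    intro j _
    have h1 : g (j + 1) ≤ (1 / ((j:ℝ) + 1)) * T j := by
      have := hstep j
      simp only [hgdef]
      push_cast
      convert this using 3 <;> ring
    have h2 : g j = (1 / ((j:ℝ) + 1)) * S j := rfl
    have h3 : (1 / ((j:ℝ) + 1)) * (S j - T j)
        = (1 / ((j:ℝ) + 1)) * S j - (1 / ((j:ℝ) + 1)) * T j := by ring
    linarith [h1, h2, h3]
  calc ∑ j ∈ Finset.range N, (1 / ((j:ℝ) + 1)) *
      (μ ({ω | P ω i ≤ min (((j:ℝ) + 1) * α / (N * W i)) 1} ∩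
          {ω | bhNumRejections N α (fun l => W l * P ω l) = j + 1})).toReal
      = ∑ j ∈ Finset.range N, (1 / ((j:ℝ) + 1)) * (S j - T j) :=
        Finset.sum_congr rfl hterm'
    _ ≤ ∑ j ∈ Finset.range N, (g j - g (j + 1)) := Finset.sum_le_sum hbound
    _ = g 0 - g N := Finset.sum_range_sub' g N
    _ ≤ g 0 := by
        have : 0 ≤ g N := by
          simp only [hgdef]
          apply mul_nonneg (by positivity) (hS0 N)
        linarith
    _ = S 0 := by simp [hgdef]
    _ ≤ (μ (A 0)).toReal := by
        apply ENNReal.toReal_mono (measure_ne_top μ _)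
        exact measure_mono Set.inter_subset_left
    _ = x 0 := hmuA 0
    _ ≤ α / N * (1 / W i) := by
        refine le_trans (min_le_left _ _) ?_
        rw [div_mul_div_comm, mul_one]
        simp



/-- Theorem 1: FDR control of the oracle Heir-GBH under hierarchical classification with
possibly overlapping groups.  Leaf (level-`L`) groups are indexed by tuples
`t ∈ Leaves ⊆ (List ℕ)` of length `L`, the group associated with a tuple-prefix
`t.take l` being `Grp (t.take l)`. -/
theorem heirGBH_FDR_control
    {Ω : Type*} [MeasurableSpace Ω] (μ : Measure Ω) [IsProbabilityMeasure μ]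
    {N : ℕ} (hN : 0 < N) (P : Ω → Fin N → ℝ) (hPmeas : Measurable P)
    (hPrange : ∀ ω i, P ω i ∈ Set.Icc (0 : ℝ) 1)
    (I0 : Finset (Fin N)) (hI0ne : I0.Nonempty)
    (hUnif : UniformNulls μ P I0) (hPRDS : PRDSNulls μ P I0)
    (L : ℕ) (hL : 1 ≤ L)
    (Leaves : Finset (List ℕ)) (hlen : ∀ t ∈ Leaves, t.length = L)
    (Grp : List ℕ → Finset (Fin N))
    (hGrp0 : Grp [] = (Finset.univ : Finset (Fin N)))
    (hcover : ∀ i : Fin N, ∃ t ∈ Leaves, i ∈ Grp t)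
    (prop : List ℕ → ℝ)
    (hprop : ∀ t, prop t = ((Grp t ∩ I0).card : ℝ) / ((Grp t).card : ℝ))
    (pi0 : ℝ) (hpi0 : pi0 = (I0.card : ℝ) / (N : ℝ)) (hpi0mem : 0 < pi0 ∧ pi0 < 1)
    (hpropmem : ∀ t ∈ Leaves, ∀ l, l ≤ L → 0 < prop (t.take l) ∧ prop (t.take l) < 1)
    (w : List ℕ → ℝ)
    (hw0 : w [] = pi0)
    (hw1 : ∀ t ∈ Leaves, w (t.take 1) = (1 - pi0) * prop (t.take 1) / (1 - prop (t.take 1)))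
    (hwrec : ∀ t ∈ Leaves, ∀ l, l + 2 ≤ L →
      w (t.take (l + 2)) = w (t.take l) *
        ((1 - prop (t.take (l + 1))) / prop (t.take (l + 1))) *
        (prop (t.take (l + 2)) / (1 - prop (t.take (l + 2)))))
    (W : Fin N → ℝ)
    (hW : ∀ i, 1 / W i =
      ((1 / (N : ℝ)) * ∑ t ∈ Leaves, ((Grp t ∩ I0).card : ℝ) / w t)⁻¹ *
        ∑ t ∈ Leaves.filter (fun t => i ∈ Grp t), 1 / w t)
    (α : ℝ) (hα : α ∈ Set.Ioo (0 : ℝ) 1) :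
    FDR μ N α I0 (fun ω i => W i * P ω i) ≤ α := by
  
  obtain ⟨hα0, hα1⟩ := hα
  obtain ⟨hpi0pos, hpi0lt⟩ := hpi0mem
  have hNpos : (0:ℝ) < N := by exact_mod_cast hN
  -- positivity of the weights w on leaves
  have hwpos : ∀ t ∈ Leaves, 0 < w t := by
    intro t ht
    have H : ∀ l, l ≤ L → 0 < w (t.take l) := by
      intro l
      induction l using Nat.strong_induction_on with
      | _ l ih =>
        intro hl
        match l with
        | 0 => rw [List.take_zero, hw0]; exact hpi0pos
        | 1 =>
          rw [hw1 t ht]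
          obtain ⟨h1, h2⟩ := hpropmem t ht 1 hL
          apply div_pos (mul_pos (by linarith) h1) (by linarith)
        | (m+2) =>
          rw [hwrec t ht m hl]
          obtain ⟨h1, h2⟩ := hpropmem t ht (m+1) (by omega)
          obtain ⟨h3, h4⟩ := hpropmem t ht (m+2) (by omega)
          have h5 : 0 < w (t.take m) := ih m (by omega) (by omega)
          apply mul_pos (mul_pos h5 (div_pos (by linarith) h1)) (div_pos h3 (by linarith))
    have := H L le_rfl
    rwa [show t.take L = t from by rw [← hlen t ht]; exact List.take_length] at this
  -- positivity of the null counts on leaves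
  have hn0pos : ∀ t ∈ Leaves, (0:ℝ) < ((Grp t ∩ I0).card : ℝ) := by
    intro t ht
    have h1 : 0 < prop (t.take L) :=
      (hpropmem t ht L le_rfl).1
    rw [show t.take L = t from by rw [← hlen t ht]; exact List.take_length, hprop t] at h1
    by_contra h
    push_neg at h
    have h0 : ((Grp t ∩ I0).card : ℝ) = 0 := le_antisymm h (by positivity)
    rw [h0, zero_div] at h1
    exact lt_irrefl _ h1
  -- Leaves is nonempty
  obtain ⟨t0, ht0, -⟩ := hcover ⟨0, hN⟩
  have hLne : Leaves.Nonempty := ⟨t0, ht0⟩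
  -- the normalizing constant
  set C : ℝ := (1 / (N : ℝ)) * ∑ t ∈ Leaves, ((Grp t ∩ I0).card : ℝ) / w t with hCdef
  have hCpos : 0 < C := by
    apply mul_pos (by positivity)
    apply Finset.sum_pos _ hLne
    intro t ht
    exact div_pos (hn0pos t ht) (hwpos t ht)
  -- the weights W are positive
  have hWinv : ∀ i, 0 < 1 / W i := by
    intro i
    rw [hW i]
    apply mul_pos (inv_pos.mpr hCpos)
    obtain ⟨t, ht, hit⟩ := hcover i
    apply Finset.sum_pos
    · intro t' ht'
      rw [Finset.mem_filter] at ht'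
      exact div_pos one_pos (hwpos t' ht'.1)
    · exact ⟨t, Finset.mem_filter.mpr ⟨ht, hit⟩⟩
  have hWpos : ∀ i, 0 < W i := by
    intro i
    exact one_div_pos.mp (hWinv i)
  -- the sum of the inverse weights over the nulls equals N
  have hsumW : ∑ i ∈ I0, 1 / W i = (N : ℝ) := by
    have h1 : ∑ i ∈ I0, 1 / W i
        = C⁻¹ * ∑ i ∈ I0, ∑ t ∈ Leaves, (if i ∈ Grp t then 1 / w t else 0) := by
      rw [Finset.mul_sum]
      apply Finset.sum_congr rfl
      intro i _
      rw [hW i, ← Finset.sum_filter]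
    have h2 : ∑ i ∈ I0, ∑ t ∈ Leaves, (if i ∈ Grp t then 1 / w t else 0)
        = ∑ t ∈ Leaves, ((Grp t ∩ I0).card : ℝ) / w t := by
      rw [Finset.sum_comm]
      apply Finset.sum_congr rfl
      intro t _
      rw [← Finset.sum_filter, Finset.sum_const]
      have hcard : (I0.filter (fun i => i ∈ Grp t)).card = (Grp t ∩ I0).card := by
        congr 1
        ext i
        simp [Finset.mem_filter, Finset.mem_inter, and_comm]
      rw [hcard, nsmul_eq_mul]
      ring
    have h3 : ∑ t ∈ Leaves, ((Grp t ∩ I0).card : ℝ) / w t = (N : ℝ) * C := by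
      rw [hCdef, ← mul_assoc, mul_one_div_cancel hNpos.ne', one_mul]
    rw [h1, h2, h3]
    rw [mul_comm, mul_assoc, mul_inv_cancel₀ hCpos.ne', mul_one]
  -- notation
  set R : Ω → ℕ := fun ω => bhNumRejections N α (fun l => W l * P ω l) with hRdef
  have hRmeas : Measurable R := by
    apply (bh_measurable N α).comp
    apply measurable_pi_lambda
    intro l
    exact measurable_const.mul ((measurable_pi_apply l).comp hPmeas)
  set D : Fin N → ℕ → Set Ω := fun i j =>
    {ω | P ω i ≤ min (((j:ℝ) + 1) * α / (N * W i)) 1} ∩ {ω | R ω = j + 1} with hDdef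
  have hDmeas : ∀ i j, MeasurableSet (D i j) := by
    intro i j
    apply MeasurableSet.inter
    · exact measurableSet_le ((measurable_pi_apply i).comp hPmeas) measurable_const
    · exact hRmeas (show MeasurableSet ({j + 1} : Set ℕ) from trivial)
  -- pointwise decomposition of the FDP
  have hpt : ∀ ω, FDP N α I0 (fun i => W i * P ω i)
      = ∑ i ∈ I0, ∑ j ∈ Finset.range N,
          Set.indicator (D i j) (fun _ => (1:ℝ) / ((j:ℝ) + 1)) ω := by
    intro ω
    rw [FDP_decomp N hN hα0 I0 hWpos (P ω) (hPrange ω)]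
    apply Finset.sum_congr rfl
    intro i _
    apply Finset.sum_congr rfl
    intro j _
    rw [Set.indicator_apply]
    simp only [hDdef, Set.mem_inter_iff, Set.mem_setOf_eq, hRdef]
  -- compute the FDR
  have hFDR : FDR μ N α I0 (fun ω i => W i * P ω i)
      = ∑ i ∈ I0, ∑ j ∈ Finset.range N, (1 / ((j:ℝ) + 1)) * (μ (D i j)).toReal := by
    have hFDReq : FDR μ N α I0 (fun ω i => W i * P ω i)
        = ∫ ω, ∑ i ∈ I0, ∑ j ∈ Finset.range N,
            Set.indicator (D i j) (fun _ => (1:ℝ) / ((j:ℝ) + 1)) ω ∂μ := by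
      apply integral_congr_ae
      filter_upwards with ω using hpt ω
    rw [hFDReq, integral_finset_sum]
    · apply Finset.sum_congr rfl
      intro i _
      rw [integral_finset_sum]
      · apply Finset.sum_congr rfl
        intro j _
        rw [MeasureTheory.integral_indicator_const _ (hDmeas i j), measureReal_def, smul_eq_mul]
        ring
      · intro j _
        exact (integrable_const _).indicator (hDmeas i j)
    · intro i _
      apply integrable_finset_sum
      intro j _
      exact (integrable_const _).indicator (hDmeas i j)
  rw [hFDR]
  -- bound each null term via the PRDS key lemma
  calc ∑ i ∈ I0, ∑ j ∈ Finset.range N, (1 / ((j:ℝ) + 1)) * (μ (D i j)).toReal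
      ≤ ∑ i ∈ I0, α / N * (1 / W i) := by
        apply Finset.sum_le_sum
        intro i hi
        exact key_null μ hN P hPmeas I0 hi hUnif hPRDS hWpos hα0
    _ = α / N * ∑ i ∈ I0, 1 / W i := by rw [Finset.mul_sum]
    _ = α := by
        rw [hsumW]
        field_simp
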